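/- Let K be a compact topological group with Haar probability measure and let π be a continuous unitary representation of K on a complex Hilbert space H. Let V ⊆ H be a nonzero finite-dimensional π-invariant subspace which is irreducible, i.e. the only π-invariant subspaces of V are 0 and V. Let χ : K → ℂ be χ(k) := trace(π(k)|_V), let d := dim V, and let P be the χ-averaged operator of π; assume that the range of P equals V (multiplicity one). Let (W_ℓ)_{ℓ ∈ ℕ} be an increasing sequence (W_ℓ ⊆ W_{ℓ+1}) of finite-dimensional π-invariant subspaces of H whose union ⋃_ℓ W_ℓ is dense in H. Then there exists ℓ₀ ∈ ℕ such that V ⊆ W_ℓ for all ℓ ≥ ℓ₀. -/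

import Mathlib

/-!
Since `χ` is continuous and the `π k` are contractions depending strongly continuously on `k`,
the averaged operator `P` is Lipschitz, and it maps every complete (e.g. finite-dimensional)
invariant subspace into itself. Writing a nonzero vector of `V = range P` as `P u`, continuity
gives some `w` in the dense union, say `w ∈ W ℓ`, with `P w ≠ 0`. Then `P w` is a nonzero vector
of the invariant subspace `V ⊓ W ℓ` of the irreducible `V`, so `V ≤ W ℓ`.
-/

open MeasureTheory

/-- The `χ`-averaged operator of a family of operators `π` on `H`:
`v ↦ d • ∫_K conj (χ k) • (π k v) dμ(k)`. -/
noncomputable def avgOp {K : Type*} [MeasurableSpace K]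
    {H : Type*} [NormedAddCommGroup H] [NormedSpace ℂ H]
    (μ : Measure K) (χ : K → ℂ) (d : ℂ) (π : K → H →L[ℂ] H) : H → H :=
  fun v => d • ∫ k, (starRingEnd ℂ) (χ k) • (π k) v ∂μ

theorem continuous_trace_restrict {𝕜 : Type*} [NontriviallyNormedField 𝕜] [CompleteSpace 𝕜]
    {X : Type*} [TopologicalSpace X] {E : Type*} [NormedAddCommGroup E] [NormedSpace 𝕜 E]
    (T : X → E →L[𝕜] E) (hT : ∀ v, Continuous fun x => T x v)
    (V : Submodule 𝕜 E) [FiniteDimensional 𝕜 V] (hV : ∀ x, ∀ v ∈ V, T x v ∈ V) :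
    Continuous fun x => LinearMap.trace 𝕜 V ((T x : E →ₗ[𝕜] E).restrict (hV x)) := by
  let R : X → V →L[𝕜] V := fun x =>
    LinearMap.toContinuousLinearMap ((T x : E →ₗ[𝕜] E).restrict (hV x))
  have hR : Continuous R :=
    continuous_clm_apply.2 fun v => (hT v).subtype_mk fun x => hV x v v.2
  let trace : (V →L[𝕜] V) →ₗ[𝕜] 𝕜 := (LinearMap.trace 𝕜 V).comp
    (LinearMap.toContinuousLinearMap : (V →ₗ[𝕜] V) ≃ₗ[𝕜] (V →L[𝕜] V)).symm.toLinearMap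
  exact trace.continuous_of_finiteDimensional.comp hR

theorem integral_mem_submodule {𝕜 : Type*} [RCLike 𝕜] {X : Type*} [MeasurableSpace X]
    {μ : Measure X} {E : Type*} [NormedAddCommGroup E] [NormedSpace 𝕜 E] [NormedSpace ℝ E]
    [CompleteSpace E] (S : Submodule 𝕜 E) [CompleteSpace S] {f : X → E} (hf : ∀ x, f x ∈ S) :
    ∫ x, f x ∂μ ∈ S := by
  have h := S.subtypeₗᵢ.integral_comp_comm (μ := μ) fun x => (⟨f x, hf x⟩ : S)
  simp only [Submodule.coe_subtypeₗᵢ, Submodule.subtype_apply] at h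
  exact h ▸ (∫ x, (⟨f x, hf x⟩ : S) ∂μ).2

section AvgOp

variable {K : Type*} [MeasurableSpace K] (μ : Measure K)
  {H : Type*} [NormedAddCommGroup H] [NormedSpace ℂ H]
  {χ : K → ℂ} {d : ℂ} {T : K → H →L[ℂ] H}

theorem avgOp_sub [TopologicalSpace K] [CompactSpace K] [OpensMeasurableSpace K]
    [IsFiniteMeasure μ] (hχ : Continuous χ) (hT : ∀ v, Continuous fun k => T k v) (v w : H) :
    avgOp μ χ d T v - avgOp μ χ d T w = avgOp μ χ d T (v - w) := by
  have hint : ∀ v, Integrable (fun k => (starRingEnd ℂ) (χ k) • T k v) μ := fun v =>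
    ((RCLike.continuous_conj.comp hχ).smul (hT v)).integrable_of_hasCompactSupport
      (HasCompactSupport.of_compactSpace _)
  simp only [avgOp, ← smul_sub, ← integral_sub (hint v) (hint w), map_sub]

theorem norm_avgOp_le [IsFiniteMeasure μ] {C : ℝ} (hχ : ∀ k, ‖χ k‖ ≤ C)
    (hT : ∀ k v, ‖T k v‖ ≤ ‖v‖) (v : H) :
    ‖avgOp μ χ d T v‖ ≤ ‖d‖ * (C * ‖v‖ * μ.real Set.univ) := by
  rw [avgOp, norm_smul]
  refine mul_le_mul_of_nonneg_left (norm_integral_le_of_norm_le_const (.of_forall fun k => ?_))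
    (norm_nonneg d)
  rw [norm_smul, RCLike.norm_conj]
  exact mul_le_mul (hχ k) (hT k v) (norm_nonneg _) ((norm_nonneg _).trans (hχ k))

theorem continuous_avgOp [TopologicalSpace K] [CompactSpace K] [OpensMeasurableSpace K]
    [IsFiniteMeasure μ] (hχ : Continuous χ) (hT : ∀ v, Continuous fun k => T k v)
    (hT₁ : ∀ k v, ‖T k v‖ ≤ ‖v‖) : Continuous (avgOp μ χ d T) := by
  obtain ⟨C, hC⟩ := isCompact_univ.exists_bound_of_continuousOn hχ.continuousOn
  refine (LipschitzWith.of_dist_le' (K := ‖d‖ * (C * μ.real Set.univ)) fun v w => ?_).continuous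
  rw [dist_eq_norm, dist_eq_norm, avgOp_sub μ hχ hT]
  linarith [norm_avgOp_le μ (fun k => hC k (Set.mem_univ k)) hT₁ (d := d) (v - w)]

theorem avgOp_mem_of_mem [CompleteSpace H] (S : Submodule ℂ H) [CompleteSpace S]
    (hS : ∀ k, ∀ v ∈ S, T k v ∈ S) {v : H} (hv : v ∈ S) : avgOp μ χ d T v ∈ S :=
  S.smul_mem d (integral_mem_submodule S fun k => S.smul_mem _ (hS k v hv))

end AvgOp

theorem Submodule.le_of_inf_ne_bot_of_irreducible {R M ι : Type*} [Ring R] [AddCommGroup M]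
    [Module R M] {T : ι → M → M} {V W : Submodule R M}
    (hV : ∀ U : Submodule R M, U ≤ V → (∀ i, ∀ v ∈ U, T i v ∈ U) → U = ⊥ ∨ U = V)
    (hVinv : ∀ i, ∀ v ∈ V, T i v ∈ V) (hWinv : ∀ i, ∀ v ∈ W, T i v ∈ W) (hVW : V ⊓ W ≠ ⊥) :
    V ≤ W := by
  rcases hV (V ⊓ W) inf_le_left fun i v hv => ⟨hVinv i v hv.1, hWinv i v hv.2⟩ with h | h
  · exact absurd h hVW
  · exact h ▸ inf_le_right
theorem stmt2_general {K : Type*} [Group K] [TopologicalSpace K]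
    [CompactSpace K] [MeasurableSpace K] [BorelSpace K]
    (μ : Measure K) [IsProbabilityMeasure μ]
    {H : Type*} [NormedAddCommGroup H] [InnerProductSpace ℂ H] [CompleteSpace H]
    (π : K →* unitary (H →L[ℂ] H))
    (hπ : ∀ v : H, Continuous fun k => (π k : H →L[ℂ] H) v)
    (V : Submodule ℂ H) [FiniteDimensional ℂ V] (hVne : V ≠ ⊥)
    (hVinv : ∀ (k : K), ∀ v ∈ V, (π k : H →L[ℂ] H) v ∈ V)
    (hVirred : ∀ U : Submodule ℂ H, U ≤ V →
      (∀ (k : K), ∀ v ∈ U, (π k : H →L[ℂ] H) v ∈ U) → U = ⊥ ∨ U = V)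
    (χ : K → ℂ)
    (hχ : ∀ k : K, χ k =
      LinearMap.trace ℂ V (((π k : H →L[ℂ] H) : H →ₗ[ℂ] H).restrict (hVinv k)))
    (d : ℂ)
    (P : H → H) (hP : P = avgOp μ χ d fun k => (π k : H →L[ℂ] H))
    (hrange : Set.range P = (V : Set H))
    (W : ℕ → Submodule ℂ H)
    (hWmono : ∀ ℓ : ℕ, W ℓ ≤ W (ℓ + 1))
    (hWfd : ∀ ℓ : ℕ, FiniteDimensional ℂ (W ℓ))
    (hWinv : ∀ (ℓ : ℕ) (k : K), ∀ v ∈ W ℓ, (π k : H →L[ℂ] H) v ∈ W ℓ)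
    (hWdense : Dense (⋃ ℓ : ℕ, (W ℓ : Set H))) :
    ∃ ℓ₀ : ℕ, ∀ ℓ ≥ ℓ₀, V ≤ W ℓ := by
  have hχcont : Continuous χ := by
    simpa only [← hχ] using continuous_trace_restrict _ hπ V hVinv
  have hPcont : Continuous P :=
    hP ▸ continuous_avgOp μ hχcont hπ fun k v => (Unitary.norm_map (π k) v).le
  obtain ⟨v, hvV, hv⟩ := Submodule.exists_mem_ne_zero_of_ne_bot hVne
  obtain ⟨u, rfl⟩ : v ∈ Set.range P := hrange ▸ hvV
  obtain ⟨w, hw, hPw⟩ := hWdense.exists_mem_open (isOpen_ne_fun hPcont continuous_const) ⟨u, hv⟩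
  obtain ⟨ℓ, hwℓ⟩ := Set.mem_iUnion.mp hw
  have hPwV : P w ∈ (V : Set H) := hrange ▸ Set.mem_range_self w
  have hPwW : P w ∈ W ℓ := by
    have := hWfd ℓ
    exact hP ▸ avgOp_mem_of_mem μ (W ℓ) (hWinv ℓ) hwℓ
  have hVW : V ≤ W ℓ := Submodule.le_of_inf_ne_bot_of_irreducible hVirred hVinv (hWinv ℓ)
    ((Submodule.ne_bot_iff _).2 ⟨P w, ⟨hPwV, hPwW⟩, hPw⟩)
  exact ⟨ℓ, fun m hm => hVW.trans (monotone_nat_of_le_succ hWmono hm)⟩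

/-- If `V` is a nonzero finite-dimensional irreducible invariant subspace realizing the isotypic
projection `P` with multiplicity one (range `P = V`), and `(W ℓ)` is an increasing sequence of
finite-dimensional invariant subspaces with dense union, then `V ⊆ W ℓ` for all large `ℓ`. -/
theorem stmt2 {K : Type*} [Group K] [TopologicalSpace K] [IsTopologicalGroup K]
    [CompactSpace K] [MeasurableSpace K] [BorelSpace K]
    (μ : Measure K) [μ.IsHaarMeasure] [IsProbabilityMeasure μ]
    {H : Type*} [NormedAddCommGroup H] [InnerProductSpace ℂ H] [CompleteSpace H]
    (π : K →* unitary (H →L[ℂ] H))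
    (hπ : ∀ v : H, Continuous fun k => (π k : H →L[ℂ] H) v)
    (V : Submodule ℂ H) [FiniteDimensional ℂ V] (hVne : V ≠ ⊥)
    (hVinv : ∀ (k : K), ∀ v ∈ V, (π k : H →L[ℂ] H) v ∈ V)
    (hVirred : ∀ U : Submodule ℂ H, U ≤ V →
      (∀ (k : K), ∀ v ∈ U, (π k : H →L[ℂ] H) v ∈ U) → U = ⊥ ∨ U = V)
    (χ : K → ℂ)
    (hχ : ∀ k : K, χ k =
      LinearMap.trace ℂ V (((π k : H →L[ℂ] H) : H →ₗ[ℂ] H).restrict (hVinv k)))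
    (d : ℂ) (hd : d = (Module.finrank ℂ V : ℂ))
    (P : H → H) (hP : P = avgOp μ χ d fun k => (π k : H →L[ℂ] H))
    (hrange : Set.range P = (V : Set H))
    (W : ℕ → Submodule ℂ H)
    (hWmono : ∀ ℓ : ℕ, W ℓ ≤ W (ℓ + 1))
    (hWfd : ∀ ℓ : ℕ, FiniteDimensional ℂ (W ℓ))
    (hWinv : ∀ (ℓ : ℕ) (k : K), ∀ v ∈ W ℓ, (π k : H →L[ℂ] H) v ∈ W ℓ)
    (hWdense : Dense (⋃ ℓ : ℕ, (W ℓ : Set H))) :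
    ∃ ℓ₀ : ℕ, ∀ ℓ ≥ ℓ₀, V ≤ W ℓ :=
  stmt2_general μ π hπ V hVne hVinv hVirred χ hχ d P hP hrange W hWmono hWfd hWinv hWdense
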